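/- arXiv:1712.04769 — 3 statements merged into one kernel-verified Lean document; each statement's English description precedes it below -/
import Mathlib

section
/- Let Λ be a σ-finite measure on 𝒫 satisfying conditions (1.4) and (1.5), and let Λ̂ be the measure on 𝒫 with density ⟨x,e_θ⟩ with respect to Λ. If ∫_𝒫 ⟨x,e_θ⟩ · (log⟨x,e_θ⟩ − 1)⁺ Λ(dx) = ∞, then for every c > 0 and every s > 0 one has ∫_s^∞ Λ̂({x ∈ 𝒫 : ⟨x,e_θ⟩ > e^{ct}}) dt = ∞. -/
open MeasureTheory ENNReal Filter

noncomputable section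

/-- The space `𝒫` of nonincreasing sequences in `[-∞, ∞)` tending to `-∞`,
equipped (as a subtype of `ℕ → EReal`) with the σ-algebra generated by the coordinate maps. -/
def calP : Set (ℕ → EReal) :=
  {x | Antitone x ∧ (∀ n, x n ≠ ⊤) ∧ Tendsto x atTop (nhds ⊥)}

/-- `e^{θ y}`, with the convention that it is `0` when `y = -∞`, even for `θ = 0`. -/
def eexp (θ : ℝ) (y : EReal) : ℝ≥0∞ :=
  if y = ⊥ then 0 else ENNReal.ofReal (Real.exp (θ * y.toReal))

/-- `⟨x, e_θ⟩ = Σ_{n ≥ 1} e^{θ x_n}` (the sequence is indexed from `0` in Lean). -/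
def ip (θ : ℝ) (x : ℕ → EReal) : ℝ≥0∞ := ∑' n, eexp θ (x n)

/-- Condition (1.4): `∫ (1 ∧ x₁²) Λ(dx) < ∞`, with `1 ∧ x₁² = 1` when `x₁ = -∞`. -/
def cond14 (Λ : Measure calP) : Prop :=
  ∫⁻ x : calP, (if x.1 0 = ⊥ then 1
    else 1 ⊓ ENNReal.ofReal ((x.1 0).toReal ^ 2)) ∂Λ < ∞

/-- Condition (1.5): `∫ (1_{x₁>1} e^{θ x₁} + Σ_{k≥2} e^{θ x_k}) Λ(dx) < ∞`. -/
def cond15 (θ : ℝ) (Λ : Measure calP) : Prop :=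
  ∫⁻ x : calP, ((if (1 : EReal) < x.1 0 then eexp θ (x.1 0) else 0)
    + ∑' k, eexp θ (x.1 (k + 1))) ∂Λ < ∞

/-- `u ↦ (log u - 1)⁺` on `[0,∞]`, with value `∞` at `u = ∞`. -/
def logM1plus (w : ℝ≥0∞) : ℝ≥0∞ :=
  if w = ∞ then ∞ else ENNReal.ofReal (Real.log w.toReal - 1)

/-!
Conditions (1.4) and (1.5) make `Λ(⟨x,e_θ⟩ > e)` finite: with `θε < 1`, either `x₁ ≥ ε`, which is
charged by (1.4), or `x₁ < ε` and the tail `Σ_{k≥2} e^{θ x_k}` exceeds `e - e^{θε}`, which is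
charged by (1.5). Hence the `L log L` integral is already infinite on `B = {⟨x,e_θ⟩ > e^{cs+1}}`,
a set of finite `Λ`-measure. By Tonelli on `B`,
`∫_s^∞ Λ̂(⟨x,e_θ⟩ > e^{ct}) dt ≥ ∫_B ⟨x,e_θ⟩ (log⟨x,e_θ⟩ / c - s) Λ(dx)`, and on `B` the length
`log⟨x,e_θ⟩ / c - s` dominates `(log⟨x,e_θ⟩ - 1) / (c (cs + 1))`.
-/

open Set

def cond14Integrand (x : ℕ → EReal) : ℝ≥0∞ :=
  if x 0 = ⊥ then 1 else 1 ⊓ ENNReal.ofReal ((x 0).toReal ^ 2)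

def cond15Integrand (θ : ℝ) (x : ℕ → EReal) : ℝ≥0∞ :=
  (if (1 : EReal) < x 0 then eexp θ (x 0) else 0) + ∑' k, eexp θ (x (k + 1))

lemma measurable_eexp (θ : ℝ) : Measurable (eexp θ) :=
  Measurable.ite measurableSet_eq measurable_const
    (ENNReal.measurable_ofReal.comp (Real.measurable_exp.comp
      (measurable_ereal_toReal.const_mul θ)))

lemma measurable_ip (θ : ℝ) : Measurable (ip θ) :=
  Measurable.tsum fun n => (measurable_eexp θ).comp (measurable_pi_apply n)

lemma measurable_cond14Integrand : Measurable cond14Integrand :=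
  Measurable.ite ((measurable_pi_apply 0) measurableSet_eq) measurable_const
    (measurable_const.min (ENNReal.measurable_ofReal.comp
      ((measurable_ereal_toReal.comp (measurable_pi_apply 0)).pow_const 2)))

lemma measurable_cond15Integrand (θ : ℝ) : Measurable (cond15Integrand θ) :=
  (Measurable.ite (measurableSet_lt measurable_const (measurable_pi_apply 0))
      ((measurable_eexp θ).comp (measurable_pi_apply 0)) measurable_const).add
    (Measurable.tsum fun k => (measurable_eexp θ).comp (measurable_pi_apply (k + 1)))

lemma eexp_le_of_le {θ : ℝ} (hθ : 0 ≤ θ) {y : EReal} {r : ℝ} (h : y ≤ r) :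
    eexp θ y ≤ ENNReal.ofReal (Real.exp (θ * r)) := by
  unfold eexp
  split_ifs with hy
  · exact zero_le
  · gcongr
    simpa using EReal.toReal_le_toReal h hy (EReal.coe_ne_top r)

lemma cond15Integrand_ge_or_cond14Integrand_ge {θ ε : ℝ} (hθ : 0 ≤ θ) (hε : 0 ≤ ε)
    {x : ℕ → EReal} (hx : x 0 ≠ ⊤) (hip : ENNReal.ofReal (Real.exp 1) < ip θ x) :
    ENNReal.ofReal (Real.exp 1 - Real.exp (θ * ε)) ≤ cond15Integrand θ x ∨
      1 ⊓ ENNReal.ofReal (ε ^ 2) ≤ cond14Integrand x := by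
  rcases le_or_gt (x 0) ε with hsmall | hlarge
  · left
    have hsplit : ip θ x = eexp θ (x 0) + ∑' k, eexp θ (x (k + 1)) :=
      tsum_eq_zero_add' ENNReal.summable
    have htail : ENNReal.ofReal (Real.exp 1) ≤
        ENNReal.ofReal (Real.exp (θ * ε)) + ∑' k, eexp θ (x (k + 1)) :=
      hip.le.trans (hsplit ▸ add_le_add_left (eexp_le_of_le hθ hsmall) _)
    rw [ENNReal.ofReal_sub _ (Real.exp_pos _).le]
    exact (tsub_le_iff_left.2 htail).trans le_add_self
  · right
    have hbot : x 0 ≠ ⊥ := ne_bot_of_gt hlarge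
    have hεx : ε ≤ (x 0).toReal := by
      simpa using EReal.toReal_le_toReal hlarge.le (EReal.coe_ne_bot ε) hx
    rw [cond14Integrand, if_neg hbot]
    gcongr

lemma measure_setOf_le_ne_top {α : Type*} [MeasurableSpace α] {μ : Measure α}
    {f : α → ℝ≥0∞} (hf : AEMeasurable f μ) (hint : ∫⁻ x, f x ∂μ ≠ ∞) {ε : ℝ≥0∞}
    (hε : ε ≠ 0) (hε' : ε ≠ ∞) : μ {x | ε ≤ f x} ≠ ∞ :=
  ne_top_of_le_ne_top (ENNReal.div_ne_top hint hε) (meas_ge_le_lintegral_div hf hε hε')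

lemma measure_exp_one_lt_ip_ne_top {θ : ℝ} (hθ : 0 ≤ θ) {Λ : Measure calP}
    (h14 : cond14 Λ) (h15 : cond15 θ Λ) :
    Λ {x : calP | ENNReal.ofReal (Real.exp 1) < ip θ x.1} ≠ ∞ := by
  set ε : ℝ := (θ + 1)⁻¹
  have hε : 0 < ε := by positivity
  have hθε : θ * ε < 1 := by
    rw [← div_eq_mul_inv, div_lt_one (by linarith)]
    linarith
  refine ne_top_of_le_ne_top ?_ ((measure_mono fun x hx =>
    cond15Integrand_ge_or_cond14Integrand_ge hθ hε.le (x.2.2.1 0) hx).trans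
      (measure_union_le _ _))
  refine ENNReal.add_ne_top.2 ⟨?_, ?_⟩
  · exact measure_setOf_le_ne_top
      ((measurable_cond15Integrand θ).comp measurable_subtype_coe).aemeasurable h15.ne
      (ENNReal.ofReal_pos.2 (sub_pos.2 (Real.exp_lt_exp.2 hθε))).ne' ENNReal.ofReal_ne_top
  · exact measure_setOf_le_ne_top
      (measurable_cond14Integrand.comp measurable_subtype_coe).aemeasurable h14.ne
      (lt_inf_iff.2 ⟨zero_lt_one, ENNReal.ofReal_pos.2 (by positivity)⟩).ne'
      (inf_le_left.trans_lt ENNReal.one_lt_top).ne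

lemma logM1plus_le_of_le_ofReal_exp {v : ℝ≥0∞} {a : ℝ} (ha : 0 ≤ a)
    (hv : v ≤ ENNReal.ofReal (Real.exp a)) : logM1plus v ≤ ENNReal.ofReal (a - 1) := by
  rw [logM1plus, if_neg (ne_top_of_le_ne_top ENNReal.ofReal_ne_top hv)]
  gcongr
  rcases ENNReal.toReal_nonneg.eq_or_lt with hzero | hpos
  · rwa [← hzero, Real.log_zero]
  · exact (Real.log_le_iff_le_exp hpos).2 (ENNReal.toReal_le_of_le_ofReal (Real.exp_pos a).le hv)

lemma logM1plus_le_mul_volume {c s : ℝ} (hc : 0 < c) (hs : 0 ≤ s) {v : ℝ≥0∞}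
    (hv : ENNReal.ofReal (Real.exp (c * s + 1)) < v) :
    logM1plus v ≤ ENNReal.ofReal (c * (c * s + 1)) *
      volume ({t | ENNReal.ofReal (Real.exp (c * t)) < v} ∩ Ioi s) := by
  by_cases hv_top : v = ∞
  · have hall : {t | ENNReal.ofReal (Real.exp (c * t)) < v} ∩ Ioi s = Ioi s := by
      simp [hv_top]
    rw [hall, Real.volume_Ioi, ENNReal.mul_top (ENNReal.ofReal_pos.2 (by positivity)).ne']
    exact le_top
  have hvpos : 0 < v.toReal := ENNReal.toReal_pos (ne_bot_of_gt hv) hv_top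
  set L := Real.log v.toReal
  have hL : c * s + 1 < L := (Real.lt_log_iff_exp_lt hvpos).2
    ((ENNReal.ofReal_lt_iff_lt_toReal (Real.exp_pos _).le hv_top).1 hv)
  have hsub : Ioo s (L / c) ⊆ {t | ENNReal.ofReal (Real.exp (c * t)) < v} ∩ Ioi s := by
    refine fun t ht => ⟨?_, ht.1⟩
    rw [mem_ofPred_eq, ENNReal.ofReal_lt_iff_lt_toReal (Real.exp_pos _).le hv_top,
      ← Real.exp_log hvpos, Real.exp_lt_exp, mul_comm]
    exact (lt_div_iff₀ hc).1 ht.2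
  have hreal : L - 1 ≤ c * (c * s + 1) * (L / c - s) := by
    have : c * (c * s + 1) * (L / c - s) = (c * s + 1) * (L - c * s) := by
      field_simp
    rw [this]
    nlinarith [mul_nonneg (mul_nonneg hc.le hs) (by linarith : 0 ≤ L - c * s - 1)]
  calc logM1plus v = ENNReal.ofReal (L - 1) := by rw [logM1plus, if_neg hv_top]
    _ ≤ ENNReal.ofReal (c * (c * s + 1) * (L / c - s)) := ENNReal.ofReal_le_ofReal hreal
    _ = ENNReal.ofReal (c * (c * s + 1)) * volume (Ioo s (L / c)) := by
        rw [Real.volume_Ioo, ENNReal.ofReal_mul (by positivity)]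
    _ ≤ _ := by gcongr

section LlogL

variable {α : Type*} [MeasurableSpace α] {μ : Measure α} {w : α → ℝ≥0∞}

lemma setLIntegral_compl_mul_logM1plus_ne_top (hw : Measurable w)
    (hfin : μ {x | ENNReal.ofReal (Real.exp 1) < w x} ≠ ∞) {a : ℝ} (ha : 1 ≤ a) :
    ∫⁻ x in {x | ENNReal.ofReal (Real.exp a) < w x}ᶜ, w x * logM1plus (w x) ∂μ ≠ ∞ := by
  set E := {x | ENNReal.ofReal (Real.exp 1) < w x}
  have hE : MeasurableSet E := measurableSet_lt measurable_const hw
  have hbound : ∀ x ∈ {x | ENNReal.ofReal (Real.exp a) < w x}ᶜ, w x * logM1plus (w x) ≤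
      E.indicator (fun _ => ENNReal.ofReal (Real.exp a) * ENNReal.ofReal (a - 1)) x := by
    intro x hx
    have hxa : w x ≤ ENNReal.ofReal (Real.exp a) := not_lt.1 hx
    by_cases hxE : x ∈ E
    · rw [indicator_of_mem hxE]
      exact mul_le_mul' hxa (logM1plus_le_of_le_ofReal_exp (by linarith) hxa)
    · have hzero : logM1plus (w x) = 0 := by
        simpa using logM1plus_le_of_le_ofReal_exp zero_le_one (not_lt.1 hxE)
      simp [hzero]
  refine ne_top_of_le_ne_top ?_ ((setLIntegral_mono (measurable_const.indicator hE) hbound).trans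
    (setLIntegral_le_lintegral _ _))
  rw [lintegral_indicator_const hE]
  exact ENNReal.mul_ne_top (ENNReal.mul_ne_top ENNReal.ofReal_ne_top ENNReal.ofReal_ne_top) hfin

theorem lintegral_withDensity_exp_lt_eq_top (hw : Measurable w)
    (hfin : μ {x | ENNReal.ofReal (Real.exp 1) < w x} ≠ ∞)
    (hLlogL : ∫⁻ x, w x * logM1plus (w x) ∂μ = ∞) {c s : ℝ} (hc : 0 < c) (hs : 0 ≤ s) :
    ∫⁻ t in Ioi s, μ.withDensity w {x | ENNReal.ofReal (Real.exp (c * t)) < w x} = ∞ := by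
  set a := c * s + 1
  have ha : 1 ≤ a := by nlinarith
  set B := {x | ENNReal.ofReal (Real.exp a) < w x}
  have hB : MeasurableSet B := measurableSet_lt measurable_const hw
  have hBint : ∫⁻ x in B, w x * logM1plus (w x) ∂μ = ∞ := by
    rw [← lintegral_add_compl _ hB, ENNReal.add_eq_top] at hLlogL
    exact hLlogL.resolve_right (setLIntegral_compl_mul_logM1plus_ne_top hw hfin ha)
  have : IsFiniteMeasure (μ.restrict B) := isFiniteMeasure_restrict.2 <|
    ne_top_of_le_ne_top hfin <| measure_mono fun x hx =>
      (ENNReal.ofReal_le_ofReal (Real.exp_le_exp.2 ha)).trans_lt hx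
  set F : α → ℝ → ℝ≥0∞ := fun x t => if ENNReal.ofReal (Real.exp (c * t)) < w x then w x else 0
  have hF : Measurable (Function.uncurry F) :=
    Measurable.ite (measurableSet_lt (by fun_prop) (hw.comp measurable_fst))
      (hw.comp measurable_fst) measurable_const
  have hK : ENNReal.ofReal (c * a) ≠ 0 := (ENNReal.ofReal_pos.2 (by positivity)).ne'
  have hinner : ∀ x ∈ B, (ENNReal.ofReal (c * a))⁻¹ * (w x * logM1plus (w x)) ≤
      ∫⁻ t in Ioi s, F x t := by
    intro x hx
    have hlevel : MeasurableSet {t | ENNReal.ofReal (Real.exp (c * t)) < w x} :=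
      measurableSet_lt (by fun_prop) measurable_const
    calc (ENNReal.ofReal (c * a))⁻¹ * (w x * logM1plus (w x))
        ≤ w x * volume ({t | ENNReal.ofReal (Real.exp (c * t)) < w x} ∩ Ioi s) := by
          rw [ENNReal.inv_mul_le_iff hK ENNReal.ofReal_ne_top, mul_left_comm]
          gcongr
          exact logM1plus_le_mul_volume hc hs hx
      _ = ∫⁻ t in Ioi s, F x t := by
          rw [← Measure.restrict_apply hlevel, ← lintegral_indicator_const hlevel]
          simp only [F, indicator_apply, mem_ofPred_eq]
  have hlower : ∀ t, ∫⁻ x in B, F x t ∂μ ≤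
      μ.withDensity w {x | ENNReal.ofReal (Real.exp (c * t)) < w x} := by
    intro t
    have hlevel : MeasurableSet {x | ENNReal.ofReal (Real.exp (c * t)) < w x} :=
      measurableSet_lt measurable_const hw
    rw [withDensity_apply _ hlevel, ← lintegral_indicator hlevel]
    simpa only [F, indicator_apply, mem_ofPred_eq] using setLIntegral_le_lintegral B (F · t)
  refine eq_top_iff.2 ?_
  calc ∞ = ∫⁻ x in B, (ENNReal.ofReal (c * a))⁻¹ * (w x * logM1plus (w x)) ∂μ := by
        rw [lintegral_const_mul' _ _ (ENNReal.inv_ne_top.2 hK), hBint,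
          ENNReal.mul_top (ENNReal.inv_ne_zero.2 ENNReal.ofReal_ne_top)]
    _ ≤ ∫⁻ x in B, ∫⁻ t in Ioi s, F x t ∂volume ∂μ := setLIntegral_mono' hB hinner
    _ = ∫⁻ t in Ioi s, ∫⁻ x in B, F x t ∂μ ∂volume := lintegral_lintegral_swap hF.aemeasurable
    _ ≤ _ := lintegral_mono hlower

end LlogL

theorem stmt1_general (θ : ℝ) (hθ : 0 ≤ θ) (Λ : Measure calP)
    (h14 : cond14 Λ) (h15 : cond15 θ Λ)
    (hLlogL : ∫⁻ x : calP, ip θ x.1 * logM1plus (ip θ x.1) ∂Λ = ∞) :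
    ∀ c : ℝ, 0 < c → ∀ s : ℝ, 0 < s →
      ∫⁻ t in Set.Ioi s,
        (Λ.withDensity fun x : calP => ip θ x.1)
          {x : calP | ENNReal.ofReal (Real.exp (c * t)) < ip θ x.1} = ∞ :=
  fun _ hc _ hs => lintegral_withDensity_exp_lt_eq_top
    ((measurable_ip θ).comp measurable_subtype_coe) (measure_exp_one_lt_ip_ne_top hθ h14 h15)
    hLlogL hc hs.le

/-- if `∫ ⟨x,e_θ⟩ (log⟨x,e_θ⟩ - 1)⁺ Λ(dx) = ∞`, then for every `c > 0` and
`s > 0`, `∫_s^∞ Λ̂(⟨x,e_θ⟩ > e^{ct}) dt = ∞`, where `Λ̂(dx) = ⟨x,e_θ⟩ Λ(dx)`. -/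
theorem stmt1 (θ : ℝ) (hθ : 0 ≤ θ) (Λ : Measure calP) [SigmaFinite Λ]
    (h14 : cond14 Λ) (h15 : cond15 θ Λ)
    (hLlogL : ∫⁻ x : calP, ip θ x.1 * logM1plus (ip θ x.1) ∂Λ = ∞) :
    ∀ c : ℝ, 0 < c → ∀ s : ℝ, 0 < s →
      ∫⁻ t in Set.Ioi s,
        (Λ.withDensity fun x : calP => ip θ x.1)
          {x : calP | ENNReal.ofReal (Real.exp (c * t)) < ip θ x.1} = ∞ :=
  stmt1_general θ hθ Λ h14 h15 hLlogL
end
end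

section
/- Let Λ be a σ-finite measure on 𝒫 satisfying conditions (1.4) and (1.5), and let z ∈ ℂ with Re z = θ. Then ∫_𝒫 ( |e^{z x₁} − 1 − z x₁ 1_{|x₁|<1}| + Σ_{k≥2} e^{θ x_k} ) Λ(dx) < ∞, where by convention e^{z x₁} = 0 and the term x₁ 1_{|x₁|<1} is 0 when x₁ = −∞. In particular, for σ² ≥ 0 and a ∈ ℝ, the cumulant κ(z) = ½σ²z² + a z + ∫_𝒫 ( e^{z x₁} − 1 − z x₁ 1_{|x₁|<1} + Σ_{k≥2} e^{z x_k} ) Λ(dx) is well defined and finite. -/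
open MeasureTheory ENNReal Filter

noncomputable section

/-- `y ↦ e^{z y}` for complex `z`, with the convention `e^{z⋅(-∞)} = 0`. -/
def cexpE (z : ℂ) (y : EReal) : ℂ :=
  if y = ⊥ then 0 else Complex.exp (z * (y.toReal : ℂ))

/-- `y ↦ y 1_{|y| < 1}`, with the convention that the term is `0` when `y = -∞`. -/
def xIn (y : EReal) : ℝ := if y ≠ ⊥ ∧ |y.toReal| < 1 then y.toReal else 0

/-!
Bound the compensated first jump `e^{z x₁} - 1 - z x₁ 1_{|x₁|<1}` according to the size of `x₁`,
using `|e^{z t}| = e^{θ t}`. For `|x₁| < 1` the Taylor remainder of `exp` makes it `O(x₁²)`.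
For `|x₁| ≥ 1` it is `e^{z x₁} - 1`: if moreover `x₁ ≤ 1` then `e^{θ x₁} ≤ e^θ` because `θ ≥ 0`,
and if `x₁ > 1` it is at most `1 + e^{θ x₁}`, where `e^{θ x₁}` is the first term of (1.5). So it is
dominated by a constant times the integrand of (1.4) plus the integrand of (1.5). The later jumps satisfy
`|e^{z x_k}| = e^{θ x_k}`, so the norm of their sum is dominated by the second term of (1.5).
-/

/-- The integrand `1 ∧ x₁²` of condition (1.4). -/
def truncSq (y : EReal) : ℝ≥0∞ :=
  if y = ⊥ then 1 else 1 ⊓ ENNReal.ofReal (y.toReal ^ 2)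

/-- The first term `1_{x₁>1} e^{θ x₁}` of the integrand of condition (1.5). -/
def largeJumpExp (θ : ℝ) (y : EReal) : ℝ≥0∞ :=
  if (1 : EReal) < y then eexp θ y else 0

theorem Complex.norm_exp_mul_ofReal (z : ℂ) (t : ℝ) :
    ‖Complex.exp (z * t)‖ = Real.exp (z.re * t) := by
  simp [Complex.norm_exp]

theorem Complex.norm_exp_sub_one_sub_le (w : ℂ) :
    ‖Complex.exp w - 1 - w‖ ≤ ‖w‖ ^ 2 * Real.exp ‖w‖ := by
  simpa [Finset.sum_range_succ, sub_sub] using Complex.norm_exp_sub_sum_le_norm_mul_exp w 2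

theorem Complex.norm_exp_mul_ofReal_sub_one_sub_le (z : ℂ) {t : ℝ} (ht : |t| ≤ 1) :
    ‖Complex.exp (z * t) - 1 - z * t‖ ≤ ‖z‖ ^ 2 * Real.exp ‖z‖ * t ^ 2 := by
  have hnorm : ‖z * (t : ℂ)‖ = ‖z‖ * |t| := by
    rw [norm_mul, Complex.norm_real, Real.norm_eq_abs]
  have hexp : Real.exp (‖z‖ * |t|) ≤ Real.exp ‖z‖ :=
    Real.exp_le_exp.2 (mul_le_of_le_one_right (norm_nonneg z) ht)
  calc ‖Complex.exp (z * t) - 1 - z * t‖ ≤ ‖z * (t : ℂ)‖ ^ 2 * Real.exp ‖z * (t : ℂ)‖ :=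
        Complex.norm_exp_sub_one_sub_le _
    _ = ‖z‖ ^ 2 * t ^ 2 * Real.exp (‖z‖ * |t|) := by rw [hnorm, mul_pow, sq_abs]
    _ ≤ ‖z‖ ^ 2 * t ^ 2 * Real.exp ‖z‖ := by gcongr
    _ = ‖z‖ ^ 2 * Real.exp ‖z‖ * t ^ 2 := by ring

theorem Complex.norm_exp_mul_ofReal_sub_one_le (z : ℂ) (t : ℝ) :
    ‖Complex.exp (z * t) - 1‖ ≤ Real.exp (z.re * t) + 1 := by
  simpa [Complex.norm_exp_mul_ofReal] using norm_sub_le (Complex.exp (z * t)) 1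

lemma eexp_eq_enorm_cexpE {θ : ℝ} {z : ℂ} (hz : z.re = θ) (y : EReal) :
    eexp θ y = ‖cexpE z y‖ₑ := by
  by_cases hy : y = ⊥
  · simp [eexp, cexpE, hy]
  · rw [eexp, cexpE, if_neg hy, if_neg hy, ← ofReal_norm, Complex.norm_exp_mul_ofReal, hz]

lemma measurable_cexpE (z : ℂ) : Measurable (cexpE z) :=
  Measurable.ite (measurableSet_singleton ⊥) measurable_const
    (Complex.measurable_exp.comp
      ((Complex.measurable_ofReal.comp measurable_ereal_toReal).const_mul z))

lemma measurable_xIn : Measurable xIn :=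
  Measurable.ite ((measurableSet_singleton ⊥).compl.inter
      (measurableSet_lt measurable_ereal_toReal.abs measurable_const))
    measurable_ereal_toReal measurable_const

lemma measurable_truncSq : Measurable truncSq :=
  Measurable.ite (measurableSet_singleton ⊥) measurable_const
    (measurable_const.inf (ENNReal.measurable_ofReal.comp (measurable_ereal_toReal.pow_const 2)))

lemma measurable_calP_apply (k : ℕ) : Measurable fun x : calP => x.1 k :=
  (measurable_pi_apply k).comp measurable_subtype_coe

lemma enorm_cexpE_sub_one_sub_le {θ : ℝ} (hθ : 0 ≤ θ) {z : ℂ} (hz : z.re = θ) (y : EReal) :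
    ‖cexpE z y - 1 - z * xIn y‖ₑ ≤
      ENNReal.ofReal (‖z‖ ^ 2 * Real.exp ‖z‖ + Real.exp θ + 1) * truncSq y
        + largeJumpExp θ y := by
  set C := ‖z‖ ^ 2 * Real.exp ‖z‖ + Real.exp θ + 1
  have hC : Real.exp θ + 1 ≤ C := by
    have : 0 ≤ ‖z‖ ^ 2 * Real.exp ‖z‖ := by positivity
    linarith
  have hC1 : 1 ≤ C := by linarith [Real.exp_pos θ]
  induction y using EReal.rec with
  | bot => simpa [cexpE, xIn, truncSq, largeJumpExp] using ENNReal.one_le_ofReal.2 hC1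
  | top => simp [cexpE, xIn]
  | coe t =>
    simp only [cexpE, xIn, truncSq, largeJumpExp, eexp, EReal.coe_ne_bot, EReal.toReal_coe,
      if_false, ne_eq, not_false_eq_true, true_and]
    rcases lt_or_ge |t| 1 with hsmall | hlarge
    · have ht2 : t ^ 2 ≤ 1 := by nlinarith [sq_abs t, abs_nonneg t]
      rw [if_pos hsmall, inf_eq_right.2 (ENNReal.ofReal_le_one.2 ht2), ← ofReal_norm,
        ← ENNReal.ofReal_mul (by linarith)]
      refine le_add_right (ENNReal.ofReal_le_ofReal ?_)
      calc _ ≤ ‖z‖ ^ 2 * Real.exp ‖z‖ * t ^ 2 := Complex.norm_exp_mul_ofReal_sub_one_sub_le z hsmall.le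
        _ ≤ C * t ^ 2 := by gcongr; linarith [Real.exp_pos θ]
    · have ht2 : 1 ≤ t ^ 2 := by nlinarith [sq_abs t, abs_nonneg t]
      have hbound := Complex.norm_exp_mul_ofReal_sub_one_le z t
      rw [hz] at hbound
      rw [if_neg hlarge.not_gt, inf_eq_left.2 (ENNReal.one_le_ofReal.2 ht2), mul_one,
        Complex.ofReal_zero, mul_zero, sub_zero, ← ofReal_norm]
      split_ifs with hbig
      · calc _ ≤ ENNReal.ofReal (1 + Real.exp (θ * t)) := by
              exact ENNReal.ofReal_le_ofReal (by linarith)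
          _ = ENNReal.ofReal 1 + ENNReal.ofReal (Real.exp (θ * t)) :=
              ENNReal.ofReal_add zero_le_one (Real.exp_pos _).le
          _ ≤ _ := by gcongr
      · have ht1 : t ≤ 1 := by exact_mod_cast not_lt.1 hbig
        have : Real.exp (θ * t) ≤ Real.exp θ := Real.exp_le_exp.2 (by nlinarith)
        rw [add_zero]
        exact ENNReal.ofReal_le_ofReal (by linarith)

lemma lintegral_enorm_compensated_add_tsum_eexp_lt_top {θ : ℝ} (hθ : 0 ≤ θ) {z : ℂ}
    (hz : z.re = θ) {Λ : Measure calP} (h14 : cond14 Λ) (h15 : cond15 θ Λ) :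
    ∫⁻ x : calP, (‖cexpE z (x.1 0) - 1 - z * xIn (x.1 0)‖ₑ
      + ∑' k, eexp θ (x.1 (k + 1))) ∂Λ < ∞ := by
  set C := ‖z‖ ^ 2 * Real.exp ‖z‖ + Real.exp θ + 1
  have hmeas : Measurable fun x : calP => truncSq (x.1 0) :=
    measurable_truncSq.comp (measurable_calP_apply 0)
  calc _ ≤ ∫⁻ x : calP, (ENNReal.ofReal C * truncSq (x.1 0)
          + (largeJumpExp θ (x.1 0) + ∑' k, eexp θ (x.1 (k + 1)))) ∂Λ := by
        refine lintegral_mono fun x => ?_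
        rw [← add_assoc]
        gcongr
        exact enorm_cexpE_sub_one_sub_le hθ hz _
    _ = ENNReal.ofReal C * ∫⁻ x : calP, truncSq (x.1 0) ∂Λ
          + ∫⁻ x : calP, (largeJumpExp θ (x.1 0) + ∑' k, eexp θ (x.1 (k + 1))) ∂Λ := by
        rw [lintegral_add_left (hmeas.const_mul _), lintegral_const_mul _ hmeas]
    _ < ∞ := ENNReal.add_lt_top.2 ⟨ENNReal.mul_lt_top ENNReal.ofReal_lt_top h14, h15⟩

theorem stmt9_general (θ : ℝ) (hθ : 0 ≤ θ) (Λ : Measure calP)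
    (h14 : cond14 Λ) (h15 : cond15 θ Λ) (z : ℂ) (hz : z.re = θ) :
    (∫⁻ x : calP,
        (ENNReal.ofReal ‖cexpE z (x.1 0) - 1 - z * (xIn (x.1 0) : ℂ)‖
          + ∑' k, eexp θ (x.1 (k + 1))) ∂Λ < ∞) ∧
      Integrable (fun x : calP =>
        cexpE z (x.1 0) - 1 - z * (xIn (x.1 0) : ℂ) + ∑' k, cexpE z (x.1 (k + 1))) Λ := by
  have hfinite := lintegral_enorm_compensated_add_tsum_eexp_lt_top hθ hz h14 h15
  refine ⟨by simpa only [ofReal_norm] using hfinite, ?_, ?_⟩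
  · have hjump (k : ℕ) := (measurable_cexpE z).comp (measurable_calP_apply k)
    have hxIn := Complex.measurable_ofReal.comp (measurable_xIn.comp (measurable_calP_apply 0))
    exact ((((hjump 0).sub_const 1).sub (hxIn.const_mul z)).add
      (.tsum fun k => hjump (k + 1))).aestronglyMeasurable
  · refine lt_of_le_of_lt (lintegral_mono fun x => ?_) hfinite
    refine (enorm_add_le _ _).trans (add_le_add le_rfl (enorm_tsum_le_tsum_enorm.trans ?_))
    exact (tsum_congr fun k => eexp_eq_enorm_cexpE hz _).ge

/-- for `z ∈ ℂ` with `Re z = θ`,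
`∫ (|e^{z x₁} - 1 - z x₁ 1_{|x₁|<1}| + Σ_{k≥2} e^{θ x_k}) Λ(dx) < ∞`; in particular the
integrand of the cumulant `κ(z)` is `Λ`-integrable, so `κ(z)` is well defined and finite. -/
theorem stmt9 (θ : ℝ) (hθ : 0 ≤ θ) (Λ : Measure calP) [SigmaFinite Λ]
    (h14 : cond14 Λ) (h15 : cond15 θ Λ) (z : ℂ) (hz : z.re = θ) :
    (∫⁻ x : calP,
        (ENNReal.ofReal ‖cexpE z (x.1 0) - 1 - z * (xIn (x.1 0) : ℂ)‖
          + ∑' k, eexp θ (x.1 (k + 1))) ∂Λ < ∞) ∧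
      Integrable (fun x : calP =>
        cexpE z (x.1 0) - 1 - z * (xIn (x.1 0) : ℂ) + ∑' k, cexpE z (x.1 (k + 1))) Λ :=
  stmt9_general θ hθ Λ h14 h15 z hz
end
end

section
/- Let Λ be a σ-finite measure on 𝒫 satisfying condition (1.5), and let 0 < c' < c. Then ∫_0^∞ e^{−cs} ( ∫_𝒫 1_{⟨x,e_θ⟩ ≤ e^{c's}+1} · Σ_{j≥1} e^{θ x_j} · ( Σ_{k≥1, k≠j} e^{θ x_k} ) Λ(dx) ) ds < ∞. -/
/-!
Write `a_n = e^{θ x_n}`. For every `j` the sum `Σ_{k ≠ j} a_k` is at most `⟨x, e_θ⟩`, and for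
`j = 1` it is the tail `Σ_{k ≥ 2} a_k`; hence `Σ_j a_j Σ_{k ≠ j} a_k ≤ 2 ⟨x, e_θ⟩ Σ_{k ≥ 2} a_k`.
On the event `⟨x, e_θ⟩ ≤ e^{c's} + 1` the inner integral is therefore at most
`2 (e^{c's} + 1) C`, where `C = ∫ Σ_{k ≥ 2} e^{θ x_k} dΛ` is finite by (1.5), and
`e^{-cs} (e^{c's} + 1)` is integrable on `(0, ∞)` because `c > c' > 0`.
-/

open MeasureTheory ENNReal Filter

noncomputable section

lemma tsum_mul_tsum_ite_ne_le (a : ℕ → ℝ≥0∞) :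
    ∑' j, a j * ∑' k, (if k = j then 0 else a k) ≤
      2 * (∑' n, a n) * ∑' k, a (k + 1) := by
  have h_zero : ∑' k, (if k = 0 then 0 else a k) = ∑' k, a (k + 1) := by
    rw [tsum_eq_zero_add' ENNReal.summable]
    simp
  have h_succ (j : ℕ) : ∑' k, (if k = j + 1 then 0 else a k) ≤ ∑' n, a n :=
    ENNReal.tsum_le_tsum fun k => by split <;> simp
  calc ∑' j, a j * ∑' k, (if k = j then 0 else a k)
      = a 0 * ∑' k, a (k + 1) + ∑' j, a (j + 1) * ∑' k, (if k = j + 1 then 0 else a k) := by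
        rw [tsum_eq_zero_add' ENNReal.summable, h_zero]
    _ ≤ (∑' n, a n) * ∑' k, a (k + 1) + ∑' j, a (j + 1) * ∑' n, a n := by
        gcongr ?_ * _ + ∑' j, _ * ?_
        · exact ENNReal.le_tsum 0
        · exact h_succ _
    _ = 2 * (∑' n, a n) * ∑' k, a (k + 1) := by
        rw [ENNReal.tsum_mul_right]
        ring

lemma ite_ip_le_mul_tsum_ne_le (θ : ℝ) (x : ℕ → EReal) (B : ℝ≥0∞) :
    (if ip θ x ≤ B then ∑' j, eexp θ (x j) * ∑' k, (if k = j then 0 else eexp θ (x k))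
      else 0) ≤ 2 * B * ∑' k, eexp θ (x (k + 1)) := by
  split_ifs with hx
  · calc _ ≤ 2 * ip θ x * ∑' k, eexp θ (x (k + 1)) :=
          tsum_mul_tsum_ite_ne_le fun n => eexp θ (x n)
      _ ≤ 2 * B * ∑' k, eexp θ (x (k + 1)) := by gcongr
  · exact zero_le

lemma lintegral_tail_lt_top_of_cond15 {θ : ℝ} {Λ : Measure calP} (h15 : cond15 θ Λ) :
    ∫⁻ x : calP, ∑' k, eexp θ (x.1 (k + 1)) ∂Λ < ∞ :=
  (lintegral_mono fun _ => le_add_self).trans_lt h15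

lemma lintegral_exp_neg_mul_exp_add_one_lt_top {c c' : ℝ} (hc : 0 < c) (hcc : c' < c) :
    ∫⁻ s in Set.Ioi (0 : ℝ),
      ENNReal.ofReal (Real.exp (-c * s)) * (ENNReal.ofReal (Real.exp (c' * s)) + 1) < ∞ := by
  have h_split (s : ℝ) :
      ENNReal.ofReal (Real.exp (-c * s)) * (ENNReal.ofReal (Real.exp (c' * s)) + 1) =
        ENNReal.ofReal (Real.exp (-(c - c') * s)) + ENNReal.ofReal (Real.exp (-c * s)) := by
    rw [mul_add, mul_one, ← ENNReal.ofReal_mul (Real.exp_nonneg _), ← Real.exp_add]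
    ring_nf
  simp_rw [h_split]
  rw [lintegral_add_left (by fun_prop)]
  exact ENNReal.add_lt_top.2
    ⟨(exp_neg_integrableOn_Ioi 0 (sub_pos.2 hcc)).lintegral_lt_top,
     (exp_neg_integrableOn_Ioi 0 hc).lintegral_lt_top⟩

theorem stmt14_general (θ : ℝ) (Λ : Measure calP)
    (h15 : cond15 θ Λ) (c c' : ℝ) (hc' : 0 < c') (hcc : c' < c) :
    ∫⁻ s in Set.Ioi (0 : ℝ),
      ENNReal.ofReal (Real.exp (-c * s)) *
        ∫⁻ x : calP,
          (if ip θ x.1 ≤ ENNReal.ofReal (Real.exp (c' * s)) + 1 then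
            ∑' j, eexp θ (x.1 j) * ∑' k, (if k = j then 0 else eexp θ (x.1 k))
          else 0) ∂Λ < ∞ := by
  set C := ∫⁻ x : calP, ∑' k, eexp θ (x.1 (k + 1)) ∂Λ
  have h2C : 2 * C ≠ ∞ := mul_ne_top ofNat_ne_top (lintegral_tail_lt_top_of_cond15 h15).ne
  have h_inner (B : ℝ≥0∞) (hB : B ≠ ∞) :
      ∫⁻ x : calP, (if ip θ x.1 ≤ B then
          ∑' j, eexp θ (x.1 j) * ∑' k, (if k = j then 0 else eexp θ (x.1 k)) else 0) ∂Λ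
        ≤ B * (2 * C) := by
    calc _ ≤ ∫⁻ x : calP, 2 * B * ∑' k, eexp θ (x.1 (k + 1)) ∂Λ :=
          lintegral_mono fun x => ite_ip_le_mul_tsum_ne_le θ x.1 B
      _ = B * (2 * C) := by
          rw [lintegral_const_mul' _ _ (mul_ne_top ofNat_ne_top hB)]
          ring
  calc _ ≤ ∫⁻ s in Set.Ioi (0 : ℝ), ENNReal.ofReal (Real.exp (-c * s)) *
          (ENNReal.ofReal (Real.exp (c' * s)) + 1) * (2 * C) := by
        refine lintegral_mono fun s => ?_
        rw [mul_assoc]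
        gcongr
        exact h_inner _ (add_ne_top.2 ⟨ofReal_ne_top, one_ne_top⟩)
    _ = (∫⁻ s in Set.Ioi (0 : ℝ), ENNReal.ofReal (Real.exp (-c * s)) *
          (ENNReal.ofReal (Real.exp (c' * s)) + 1)) * (2 * C) := lintegral_mul_const' _ _ h2C
    _ < ∞ := mul_lt_top (lintegral_exp_neg_mul_exp_add_one_lt_top (hc'.trans hcc) hcc)
        h2C.lt_top

/-- for `0 < c' < c`,
`∫_0^∞ e^{-cs} (∫ 1_{⟨x,e_θ⟩ ≤ e^{c's}+1} Σ_{j≥1} e^{θ x_j} (Σ_{k≠j} e^{θ x_k}) Λ(dx)) ds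
  < ∞`. -/
theorem stmt14 (θ : ℝ) (hθ : 0 ≤ θ) (Λ : Measure calP) [SigmaFinite Λ]
    (h15 : cond15 θ Λ) (c c' : ℝ) (hc' : 0 < c') (hcc : c' < c) :
    ∫⁻ s in Set.Ioi (0 : ℝ),
      ENNReal.ofReal (Real.exp (-c * s)) *
        ∫⁻ x : calP,
          (if ip θ x.1 ≤ ENNReal.ofReal (Real.exp (c' * s)) + 1 then
            ∑' j, eexp θ (x.1 j) * ∑' k, (if k = j then 0 else eexp θ (x.1 k))
          else 0) ∂Λ < ∞ :=
  stmt14_general θ Λ h15 c c' hc' hcc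
end
end
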